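/- Let k be a positive integer, Λ an aperiodic row-finite k-graph without sources, and R a commutative ring with 1. Let x = Σ_{(α,β)∈F} r_{α,β} s_α s_{β*} be a nonzero element of KP_R(Λ) written in normal form. Then there exist σ, τ ∈ Λ, a pair (δ,γ) ∈ F and a vertex w ∈ Λ^0 such that s_{σ*} x s_τ = r_{δ,γ} p_w. -/

import Mathlib

namespace KP

/-- A `k`-graph: a nonempty countable small category `Λ` together with a degree
functor `d : Λ → ℕ^k` satisfying the unique factorization property.  Objects
(vertices) are identified with identity morphisms via `ident`.  The composition
`comp l m` is only meaningful when `s l = r m`. -/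
structure KGraph (k : ℕ) where
  V : Type
  E : Type
  nonemptyV : Nonempty V
  countableE : Countable E
  r : E → V
  s : E → V
  d : E → Fin k → ℕ
  ident : V → E
  comp : E → E → E
  r_ident : ∀ v, r (ident v) = v
  s_ident : ∀ v, s (ident v) = v
  d_ident : ∀ v, d (ident v) = 0
  r_comp : ∀ ⦃l m : E⦄, s l = r m → r (comp l m) = r l
  s_comp : ∀ ⦃l m : E⦄, s l = r m → s (comp l m) = s m
  d_comp : ∀ ⦃l m : E⦄, s l = r m → d (comp l m) = d l + d m
  comp_assoc : ∀ ⦃l m n : E⦄, s l = r m → s m = r n →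
    comp (comp l m) n = comp l (comp m n)
  ident_comp : ∀ l : E, comp (ident (r l)) l = l
  comp_ident : ∀ l : E, comp l (ident (s l)) = l
  eq_ident_of_d_eq_zero : ∀ l : E, d l = 0 → l = ident (r l)
  factor : ∀ (l : E) (m n : Fin k → ℕ), d l = m + n →
    ∃! p : E × E, d p.1 = m ∧ d p.2 = n ∧ s p.1 = r p.2 ∧ comp p.1 p.2 = l

namespace KGraph

variable {k : ℕ}

/-- `Λ` is row-finite if every `vΛ^n` is finite. -/
def RowFinite (Λ : KGraph k) : Prop :=
  ∀ (v : Λ.V) (n : Fin k → ℕ), {l : Λ.E | Λ.r l = v ∧ Λ.d l = n}.Finite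

/-- `Λ` has no sources if every `vΛ^n` is nonempty. -/
def NoSources (Λ : KGraph k) : Prop :=
  ∀ (v : Λ.V) (n : Fin k → ℕ), ∃ l : Λ.E, Λ.r l = v ∧ Λ.d l = n

/-- `H ⊆ Λ^0` is hereditary if `r(l) ∈ H` implies `s(l) ∈ H`. -/
def HereditarySet (Λ : KGraph k) (H : Set Λ.V) : Prop :=
  ∀ l : Λ.E, Λ.r l ∈ H → Λ.s l ∈ H

/-- `H ⊆ Λ^0` is saturated if `s(vΛ^n) ⊆ H` implies `v ∈ H`. -/
def SaturatedSet (Λ : KGraph k) (H : Set Λ.V) : Prop :=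
  ∀ (v : Λ.V) (n : Fin k → ℕ),
    (∀ l : Λ.E, Λ.r l = v → Λ.d l = n → Λ.s l ∈ H) → v ∈ H

open Classical in
/-- The segment `l(p,q)` of a path `l`: the unique middle factor in a
factorization `l = l'l''l'''` with `d l' = p` and `d l'' = q - p` (when `p ≤ q ≤ d l`). -/
noncomputable def seg (Λ : KGraph k) (l : Λ.E) (p q : Fin k → ℕ) : Λ.E :=
  if h : ∃ t : Λ.E × Λ.E × Λ.E, Λ.d t.1 = p ∧ Λ.d t.2.1 = q - p ∧
      Λ.s t.1 = Λ.r t.2.1 ∧ Λ.s t.2.1 = Λ.r t.2.2 ∧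
      Λ.comp t.1 (Λ.comp t.2.1 t.2.2) = l
  then (Classical.choose h).2.1 else l

/-- Aperiodicity in the finite-path formulation of Robertson and Sims. -/
def Aperiodic (Λ : KGraph k) : Prop :=
  ∀ (v : Λ.V) (m n : Fin k → ℕ), m ≠ n →
    ∃ l : Λ.E, Λ.r l = v ∧ m ⊔ n ≤ Λ.d l ∧
      Λ.seg l m (m + Λ.d l - m ⊔ n) ≠ Λ.seg l n (n + Λ.d l - m ⊔ n)

end KGraph

/-- An infinite path in `Λ`: a degree-preserving functor `x : Ω_k → Λ`,
recorded by its segments `x.f p q = x(p,q)` for `p ≤ q`. -/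
structure InfPath {k : ℕ} (Λ : KGraph k) where
  f : (Fin k → ℕ) → (Fin k → ℕ) → Λ.E
  deg : ∀ p q : Fin k → ℕ, p ≤ q → Λ.d (f p q) = q - p
  compat : ∀ p q u : Fin k → ℕ, p ≤ q → q ≤ u → Λ.s (f p q) = Λ.r (f q u)
  comp_f : ∀ p q u : Fin k → ℕ, p ≤ q → q ≤ u → Λ.comp (f p q) (f q u) = f p u

/-- The vertex `x(n)` of an infinite path. -/
def InfPath.vtx {k : ℕ} {Λ : KGraph k} (x : InfPath Λ) (n : Fin k → ℕ) : Λ.V :=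
  Λ.r (x.f n n)

/-- `Λ` is cofinal if for every infinite path `x` and vertex `v` there is `n`
with `vΛx(n)` nonempty. -/
def KGraph.Cofinal {k : ℕ} (Λ : KGraph k) : Prop :=
  ∀ (x : InfPath Λ) (v : Λ.V), ∃ (n : Fin k → ℕ) (l : Λ.E),
    Λ.r l = v ∧ Λ.s l = x.vtx n

/-- A Kumjian-Pask `Λ`-family in a ring `A`.  `P v = P_v`, `S l = S_l` and
`S' l = S_{l*}`; by convention `S` and `S'` are extended to vertices (paths of
degree `0`) by `S_v = S_{v*} = P_v`. -/
structure KPFamily {k : ℕ} (Λ : KGraph k) (A : Type) [Ring A] where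
  P : Λ.V → A
  S : Λ.E → A
  S' : Λ.E → A
  S_ident : ∀ v, S (Λ.ident v) = P v
  S'_ident : ∀ v, S' (Λ.ident v) = P v
  idem : ∀ v, P v * P v = P v
  orth : ∀ v w, v ≠ w → P v * P w = 0
  mul_S : ∀ ⦃l m : Λ.E⦄, Λ.d l ≠ 0 → Λ.d m ≠ 0 → Λ.s l = Λ.r m →
    S l * S m = S (Λ.comp l m)
  mul_S' : ∀ ⦃l m : Λ.E⦄, Λ.d l ≠ 0 → Λ.d m ≠ 0 → Λ.s l = Λ.r m →
    S' m * S' l = S' (Λ.comp l m)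
  P_mul_S : ∀ l : Λ.E, Λ.d l ≠ 0 → P (Λ.r l) * S l = S l
  S_mul_P : ∀ l : Λ.E, Λ.d l ≠ 0 → S l * P (Λ.s l) = S l
  P_mul_S' : ∀ l : Λ.E, Λ.d l ≠ 0 → P (Λ.s l) * S' l = S' l
  S'_mul_P : ∀ l : Λ.E, Λ.d l ≠ 0 → S' l * P (Λ.r l) = S' l
  KP3_eq : ∀ l : Λ.E, Λ.d l ≠ 0 → S' l * S l = P (Λ.s l)
  KP3_ne : ∀ l m : Λ.E, Λ.d l ≠ 0 → Λ.d l = Λ.d m → l ≠ m → S' l * S m = 0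
  KP4 : ∀ (v : Λ.V) (n : Fin k → ℕ), n ≠ 0 → ∀ F : Finset Λ.E,
    (∀ l : Λ.E, l ∈ F ↔ Λ.r l = v ∧ Λ.d l = n) →
    P v = ∑ l ∈ F, S l * S' l

/-- The Kumjian-Pask algebra of `Λ` with coefficients in `R`: an `R`-algebra
`A` together with a generating Kumjian-Pask family `(p,s)` which is universal
for Kumjian-Pask `Λ`-families, carries a `ℤ^k`-grading with the prescribed
homogeneous components, and in which `r • p_v ≠ 0` for `r ≠ 0`. -/
structure KPAlgebra {k : ℕ} (Λ : KGraph k) (R : Type) [CommRing R]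
    (A : Type) [Ring A] [Algebra R A] where
  fam : KPFamily Λ A
  universal : ∀ (B : Type) [Ring B] [Algebra R B] (QT : KPFamily Λ B),
    ∃! φ : A →ₐ[R] B,
      (∀ v, φ (fam.P v) = QT.P v) ∧
      (∀ l, Λ.d l ≠ 0 → φ (fam.S l) = QT.S l) ∧
      (∀ l, Λ.d l ≠ 0 → φ (fam.S' l) = QT.S' l)
  grading : (Fin k → ℤ) → AddSubgroup A
  grading_mul : ∀ (m n : Fin k → ℤ), ∀ a ∈ grading m, ∀ b ∈ grading n,
    a * b ∈ grading (m + n)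
  grading_internal : DirectSum.IsInternal grading
  grading_eq : ∀ n : Fin k → ℤ, (grading n : Set A) =
    ↑(Submodule.span R {x : A | ∃ l m : Λ.E,
      (fun i => (Λ.d l i : ℤ) - (Λ.d m i : ℤ)) = n ∧ x = fam.S l * fam.S' m})
  smul_P_ne_zero : ∀ (v : Λ.V) (c : R), c ≠ 0 → c • fam.P v ≠ 0

/-- A `G`-grading on a ring `A`: additive subgroups with `A_g A_h ⊆ A_{g+h}`
such that `A` is their internal direct sum. -/
def IsGrading {G A : Type} [AddCommGroup G] [DecidableEq G] [Ring A]
    (gr : G → AddSubgroup A) : Prop :=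
  (∀ g h : G, ∀ a ∈ gr g, ∀ b ∈ gr h, a * b ∈ gr (g + h)) ∧
  DirectSum.IsInternal gr

/-- An ideal `I` is graded when every element of `I` is a sum of homogeneous
elements of `I`, i.e. `I = Σ_g (I ∩ A_g)`. -/
def IsGradedIdeal {G A : Type} [Ring A] (gr : G → AddSubgroup A)
    (I : TwoSidedIdeal A) : Prop :=
  ∀ x ∈ I, x ∈ AddSubgroup.closure {y : A | y ∈ I ∧ ∃ g : G, y ∈ gr g}

/-- An ideal `I` of `KP_R(Λ)` is basic if `c • p_v ∈ I` with `c ≠ 0` implies `p_v ∈ I`. -/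
def IsBasic {k : ℕ} {Λ : KGraph k} {R : Type} [CommRing R]
    {A : Type} [Ring A] [Algebra R A] (KP : KPAlgebra Λ R A)
    (I : TwoSidedIdeal A) : Prop :=
  ∀ (c : R) (v : Λ.V), c ≠ 0 → c • KP.fam.P v ∈ I → KP.fam.P v ∈ I

/-- An ideal is idempotent if it is spanned by products `a * b` with `a, b ∈ I`. -/
def IsIdempotentIdeal {A : Type} [Ring A] (I : TwoSidedIdeal A) : Prop :=
  (I : Set A) ⊆ ↑(AddSubgroup.closure {x : A | ∃ a ∈ I, ∃ b ∈ I, x = a * b})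

/-- `RestrCompat Λ H Λ' eV eE` asserts that `Λ'` is (a realization of) the
subgraph `Λ∖H = (Λ^0∖H, {l ∈ Λ : s(l) ∉ H}, r, s)` with the restricted
structure maps, the identifications being given by the equivalences `eV`, `eE`. -/
def RestrCompat {k : ℕ} (Λ : KGraph k) (H : Set Λ.V) (Λ' : KGraph k)
    (eV : Λ'.V ≃ {v : Λ.V // v ∉ H}) (eE : Λ'.E ≃ {l : Λ.E // Λ.s l ∉ H}) : Prop :=
  (∀ l : Λ'.E, (eV (Λ'.r l)).1 = Λ.r (eE l).1) ∧
  (∀ l : Λ'.E, (eV (Λ'.s l)).1 = Λ.s (eE l).1) ∧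
  (∀ l : Λ'.E, Λ'.d l = Λ.d (eE l).1) ∧
  (∀ v : Λ'.V, (eE (Λ'.ident v)).1 = Λ.ident (eV v).1) ∧
  (∀ l m : Λ'.E, Λ'.s l = Λ'.r m →
    (eE (Λ'.comp l m)).1 = Λ.comp (eE l).1 (eE m).1)

/-- `Ind M`: the ideal of `KP_R(Λ)` induced by a set (ideal) `M` of coefficients,
`Ind M = span_R {c • s_a s_{b*} : c ∈ M, a b ∈ Λ}`. -/
def IndSpan {k : ℕ} {Λ : KGraph k} {R : Type} [CommRing R]
    {A : Type} [Ring A] [Algebra R A] (KP : KPAlgebra Λ R A) (M : Set R) :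
    Submodule R A :=
  Submodule.span R {x : A | ∃ c ∈ M, ∃ a b : Λ.E, x = c • (KP.fam.S a * KP.fam.S' b)}

/-- `Res I = {c ∈ R : c • p_v ∈ I for all v ∈ Λ^0}`. -/
def ResSet {k : ℕ} {Λ : KGraph k} {R : Type} [CommRing R]
    {A : Type} [Ring A] [Algebra R A] (KP : KPAlgebra Λ R A) (I : Set A) : Set R :=
  {c : R | ∀ v : Λ.V, c • KP.fam.P v ∈ I}

/-!
Since `x = Σ_γ (x s_γ) s_{γ*}` over the ghost parts `γ` of `x`, some `x s_γ` is nonzero, and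
by (KP3) it equals `Σ c_{α,γ} s_α` over the `α` with source `s(γ)`. Fix one such `δ`.
If `d(α) = d(δ)` and `α ≠ δ` then `s_{δ*} s_α = 0` by (KP3). If `d(α) ≠ d(δ)`, aperiodicity
gives a path `τ` such that `δτ` and `ατ` have no common extension, so expanding
`s_{(δτ)*} s_{ατ}` by (KP4) to degree `d(δτ) ∨ d(ατ)` shows that it vanishes. Extending such
paths one after another handles all `α` at once, and then
`s_{(δτ)*} x s_{γτ} = c_{δ,γ} p_{s(τ)}`.
-/

namespace KGraph

variable {k : ℕ} (Λ : KGraph k)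

lemma s_eq_r_of_d_eq_zero {l : Λ.E} (h : Λ.d l = 0) : Λ.s l = Λ.r l := by
  rw [Λ.eq_ident_of_d_eq_zero l h, Λ.s_ident, Λ.r_ident]

lemma comp_eq_right_of_d_eq_zero {l m : Λ.E} (h : Λ.s l = Λ.r m) (hl : Λ.d l = 0) :
    Λ.comp l m = m := by
  rw [Λ.eq_ident_of_d_eq_zero l hl, ← Λ.s_eq_r_of_d_eq_zero hl, h, Λ.ident_comp]

lemma comp_eq_left_of_d_eq_zero {l m : Λ.E} (h : Λ.s l = Λ.r m) (hm : Λ.d m = 0) :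
    Λ.comp l m = l := by
  rw [Λ.eq_ident_of_d_eq_zero m hm, ← h, Λ.comp_ident]

variable {Λ}

lemma eq_and_eq_of_comp_eq {a b a' b' : Λ.E} (hab : Λ.s a = Λ.r b) (hab' : Λ.s a' = Λ.r b')
    (hd : Λ.d a = Λ.d a') (h : Λ.comp a b = Λ.comp a' b') : a = a' ∧ b = b' := by
  have hdb : Λ.d b = Λ.d b' := by
    have h' := Λ.d_comp hab
    rw [h, Λ.d_comp hab', hd] at h'
    exact (add_left_cancel h').symm
  obtain ⟨_, _, huniq⟩ := Λ.factor (Λ.comp a b) (Λ.d a) (Λ.d b) (Λ.d_comp hab)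
  have e := (huniq (a, b) ⟨rfl, rfl, hab, rfl⟩).trans
    (huniq (a', b') ⟨hd.symm, hdb.symm, hab', h.symm⟩).symm
  exact Prod.ext_iff.mp e

lemma exists_comp_comp_eq {l : Λ.E} {p q : Fin k → ℕ} (hpq : p ≤ q) (hq : q ≤ Λ.d l) :
    ∃ a b c, Λ.d a = p ∧ Λ.d b = q - p ∧ Λ.s a = Λ.r b ∧ Λ.s b = Λ.r c ∧
      Λ.comp a (Λ.comp b c) = l := by
  obtain ⟨⟨a, t⟩, ⟨hda, hdt, hat, rfl⟩, -⟩ := Λ.factor l p (Λ.d l - p) (by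
    funext i
    have : p i ≤ q i := hpq i
    have : q i ≤ Λ.d l i := hq i
    simp only [Pi.add_apply, Pi.sub_apply]
    omega)
  obtain ⟨⟨b, c⟩, ⟨hdb, -, hbc, rfl⟩, -⟩ := Λ.factor t (q - p) (Λ.d t - (q - p)) (by
    rw [Λ.d_comp hat, hda] at hq
    funext i
    have : q i ≤ p i + Λ.d t i := hq i
    simp only [Pi.add_apply, Pi.sub_apply]
    omega)
  exact ⟨a, b, c, hda, hdb, hat.trans (Λ.r_comp hbc), hbc, rfl⟩

lemma seg_comp_comp {a b c : Λ.E} {p q : Fin k → ℕ} (hda : Λ.d a = p) (hdb : Λ.d b = q - p)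
    (hab : Λ.s a = Λ.r b) (hbc : Λ.s b = Λ.r c) :
    Λ.seg (Λ.comp a (Λ.comp b c)) p q = b := by
  have hex : ∃ t : Λ.E × Λ.E × Λ.E, Λ.d t.1 = p ∧ Λ.d t.2.1 = q - p ∧
      Λ.s t.1 = Λ.r t.2.1 ∧ Λ.s t.2.1 = Λ.r t.2.2 ∧
      Λ.comp t.1 (Λ.comp t.2.1 t.2.2) = Λ.comp a (Λ.comp b c) :=
    ⟨(a, b, c), hda, hdb, hab, hbc, rfl⟩
  rw [seg, dif_pos hex]
  obtain ⟨h₁, h₂, h₁₂, h₂₃, h⟩ := Classical.choose_spec hex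
  obtain ⟨-, e⟩ := eq_and_eq_of_comp_eq (h₁₂.trans (Λ.r_comp h₂₃).symm)
    (hab.trans (Λ.r_comp hbc).symm) (h₁.trans hda.symm) h
  exact (eq_and_eq_of_comp_eq h₂₃ hbc (h₂.trans hdb.symm) e).1

lemma seg_comp_left {a b : Λ.E} {p q : Fin k → ℕ} (hab : Λ.s a = Λ.r b) (hpq : p ≤ q)
    (hq : q ≤ Λ.d b) : Λ.seg (Λ.comp a b) (Λ.d a + p) (Λ.d a + q) = Λ.seg b p q := by
  obtain ⟨b₁, b₂, b₃, hd₁, hd₂, h₁₂, h₂₃, rfl⟩ := exists_comp_comp_eq hpq hq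
  have h₁₂' : Λ.s b₁ = Λ.r (Λ.comp b₂ b₃) := h₁₂.trans (Λ.r_comp h₂₃).symm
  have hab₁ : Λ.s a = Λ.r b₁ := hab.trans (Λ.r_comp h₁₂')
  rw [seg_comp_comp hd₁ hd₂ h₁₂ h₂₃, ← Λ.comp_assoc hab₁ h₁₂']
  refine seg_comp_comp (by rw [Λ.d_comp hab₁, hd₁]) ?_ (by rw [Λ.s_comp hab₁]; exact h₁₂) h₂₃
  rw [hd₂, add_tsub_add_eq_tsub_left]

lemma seg_comp_right {b c : Λ.E} {p q : Fin k → ℕ} (hbc : Λ.s b = Λ.r c) (hpq : p ≤ q)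
    (hq : q ≤ Λ.d b) : Λ.seg (Λ.comp b c) p q = Λ.seg b p q := by
  obtain ⟨b₁, b₂, b₃, hd₁, hd₂, h₁₂, h₂₃, rfl⟩ := exists_comp_comp_eq hpq hq
  have h₁₂' : Λ.s b₁ = Λ.r (Λ.comp b₂ b₃) := h₁₂.trans (Λ.r_comp h₂₃).symm
  have h₃c : Λ.s b₃ = Λ.r c := by rwa [Λ.s_comp h₁₂', Λ.s_comp h₂₃] at hbc
  rw [seg_comp_comp hd₁ hd₂ h₁₂ h₂₃, Λ.comp_assoc h₁₂' ((Λ.s_comp h₂₃).trans h₃c),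
    Λ.comp_assoc h₂₃ h₃c]
  exact seg_comp_comp hd₁ hd₂ h₁₂ (h₂₃.trans (Λ.r_comp h₃c).symm)

lemma seg_comp_comp_add {μ l ξ : Λ.E} {p q : Fin k → ℕ} (hμ : Λ.s μ = Λ.r l)
    (hξ : Λ.s l = Λ.r ξ) (hpq : p ≤ q) (hq : q ≤ Λ.d l) :
    Λ.seg (Λ.comp (Λ.comp μ l) ξ) (Λ.d μ + p) (Λ.d μ + q) = Λ.seg l p q := by
  rw [seg_comp_right (by rwa [Λ.s_comp hμ]) (add_le_add_right hpq _)
    (by rw [Λ.d_comp hμ]; exact add_le_add_right hq _), seg_comp_left hμ hpq hq]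

/-- A common extension of `μl` and `νl` would contain the segments of `l` compared by
aperiodicity at the same position `d μ + d ν`. -/
lemma comp_comp_ne_of_seg_ne {μ ν l ξ ω : Λ.E} (hμ : Λ.s μ = Λ.r l) (hν : Λ.s ν = Λ.r l)
    (hξ : Λ.s l = Λ.r ξ) (hω : Λ.s l = Λ.r ω) (hsup : Λ.d μ ⊔ Λ.d ν ≤ Λ.d l)
    (hne : Λ.seg l (Λ.d μ) (Λ.d μ + Λ.d l - Λ.d μ ⊔ Λ.d ν) ≠
      Λ.seg l (Λ.d ν) (Λ.d ν + Λ.d l - Λ.d μ ⊔ Λ.d ν)) :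
    Λ.comp (Λ.comp μ l) ξ ≠ Λ.comp (Λ.comp ν l) ω := by
  have hsup' : ∀ i, max (Λ.d μ i) (Λ.d ν i) ≤ Λ.d l i := hsup
  have hle : ∀ a, a ≤ Λ.d μ ⊔ Λ.d ν → a ≤ a + Λ.d l - Λ.d μ ⊔ Λ.d ν ∧
      a + Λ.d l - Λ.d μ ⊔ Λ.d ν ≤ Λ.d l := by
    refine fun a ha => ⟨fun i => ?_, fun i => ?_⟩ <;>
    · have : a i ≤ max (Λ.d μ i) (Λ.d ν i) := ha i
      have := hsup' i
      simp only [Pi.add_apply, Pi.sub_apply, Pi.sup_apply]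
      omega
  intro h
  apply hne
  rw [← seg_comp_comp_add hν hω (hle _ le_sup_left).1 (hle _ le_sup_left).2,
    ← seg_comp_comp_add hμ hξ (hle _ le_sup_right).1 (hle _ le_sup_right).2, h]
  congr 1 <;> funext i <;> have := hsup' i <;>
    simp only [Pi.add_apply, Pi.sub_apply, Pi.sup_apply] <;> omega

end KGraph

namespace KPFamily

variable {k : ℕ} {Λ : KGraph k} {A : Type} [Ring A] (f : KPFamily Λ A)

lemma S_eq_P {l : Λ.E} (h : Λ.d l = 0) : f.S l = f.P (Λ.r l) := by
  conv_lhs => rw [Λ.eq_ident_of_d_eq_zero l h]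
  exact f.S_ident (Λ.r l)

lemma S'_eq_P {l : Λ.E} (h : Λ.d l = 0) : f.S' l = f.P (Λ.r l) := by
  conv_lhs => rw [Λ.eq_ident_of_d_eq_zero l h]
  exact f.S'_ident (Λ.r l)

lemma P_r_mul_S (l : Λ.E) : f.P (Λ.r l) * f.S l = f.S l := by
  by_cases h : Λ.d l = 0
  · rw [f.S_eq_P h, f.idem]
  · exact f.P_mul_S l h

lemma S_mul_P_s (l : Λ.E) : f.S l * f.P (Λ.s l) = f.S l := by
  by_cases h : Λ.d l = 0
  · rw [f.S_eq_P h, Λ.s_eq_r_of_d_eq_zero h, f.idem]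
  · exact f.S_mul_P l h

lemma P_s_mul_S' (l : Λ.E) : f.P (Λ.s l) * f.S' l = f.S' l := by
  by_cases h : Λ.d l = 0
  · rw [f.S'_eq_P h, Λ.s_eq_r_of_d_eq_zero h, f.idem]
  · exact f.P_mul_S' l h

lemma S'_mul_P_r (l : Λ.E) : f.S' l * f.P (Λ.r l) = f.S' l := by
  by_cases h : Λ.d l = 0
  · rw [f.S'_eq_P h, f.idem]
  · exact f.S'_mul_P l h

lemma S_mul_P_of_ne {l : Λ.E} {w : Λ.V} (h : Λ.s l ≠ w) : f.S l * f.P w = 0 := by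
  rw [← f.S_mul_P_s l, mul_assoc, f.orth _ _ h, mul_zero]

lemma S_mul_S {l m : Λ.E} (h : Λ.s l = Λ.r m) : f.S l * f.S m = f.S (Λ.comp l m) := by
  by_cases hl : Λ.d l = 0
  · rw [Λ.comp_eq_right_of_d_eq_zero h hl, f.S_eq_P hl, ← Λ.s_eq_r_of_d_eq_zero hl, h,
      f.P_r_mul_S]
  by_cases hm : Λ.d m = 0
  · rw [Λ.comp_eq_left_of_d_eq_zero h hm, f.S_eq_P hm, ← h, f.S_mul_P_s]
  exact f.mul_S hl hm h

lemma S'_mul_S' {l m : Λ.E} (h : Λ.s l = Λ.r m) : f.S' m * f.S' l = f.S' (Λ.comp l m) := by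
  by_cases hl : Λ.d l = 0
  · rw [Λ.comp_eq_right_of_d_eq_zero h hl, f.S'_eq_P hl, ← Λ.s_eq_r_of_d_eq_zero hl, h,
      f.S'_mul_P_r]
  by_cases hm : Λ.d m = 0
  · rw [Λ.comp_eq_left_of_d_eq_zero h hm, f.S'_eq_P hm, ← h, f.P_s_mul_S']
  exact f.mul_S' hl hm h

lemma S'_mul_S_self (l : Λ.E) : f.S' l * f.S l = f.P (Λ.s l) := by
  by_cases h : Λ.d l = 0
  · rw [f.S'_eq_P h, f.S_eq_P h, Λ.s_eq_r_of_d_eq_zero h, f.idem]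
  · exact f.KP3_eq l h

lemma S'_mul_S_of_ne {l m : Λ.E} (hd : Λ.d l = Λ.d m) (hne : l ≠ m) : f.S' l * f.S m = 0 := by
  by_cases h : Λ.d l = 0
  · have hm : Λ.d m = 0 := hd ▸ h
    rw [f.S'_eq_P h, f.S_eq_P hm]
    refine f.orth _ _ fun hr => hne ?_
    rw [Λ.eq_ident_of_d_eq_zero l h, Λ.eq_ident_of_d_eq_zero m hm, hr]
  · exact f.KP3_ne l m h hd hne

lemma S'_comp_mul_S_comp {μ ν τ : Λ.E} (hμ : Λ.s μ = Λ.r τ) (hν : Λ.s ν = Λ.r τ) :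
    f.S' (Λ.comp μ τ) * f.S (Λ.comp ν τ) = f.S' τ * (f.S' μ * f.S ν) * f.S τ := by
  rw [← f.S'_mul_S' hμ, ← f.S_mul_S hν]
  simp only [mul_assoc]

lemma P_eq_sum_S_mul_S' (v : Λ.V) (n : Fin k → ℕ) (G : Finset Λ.E)
    (hG : ∀ l : Λ.E, l ∈ G ↔ Λ.r l = v ∧ Λ.d l = n) :
    f.P v = ∑ l ∈ G, f.S l * f.S' l := by
  by_cases hn : n = 0
  · have hGv : G = {Λ.ident v} := by
      ext l
      rw [hG l, Finset.mem_singleton]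
      constructor
      · rintro ⟨rfl, hl⟩
        exact Λ.eq_ident_of_d_eq_zero l (hl.trans hn)
      · rintro rfl
        exact ⟨Λ.r_ident v, hn ▸ Λ.d_ident v⟩
    rw [hGv, Finset.sum_singleton, f.S_ident, f.S'_ident, f.idem]
  · exact f.KP4 v n hn G hG

/-- Expand `s_{a*}` and `s_b` by (KP4) to the common degree `d a ∨ d b`, then apply (KP3). -/
lemma S'_mul_S_eq_zero_of_comp_ne (hrf : Λ.RowFinite) {a b : Λ.E}
    (h : ∀ ξ ω : Λ.E, Λ.s a = Λ.r ξ → Λ.s b = Λ.r ω →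
      Λ.d ξ = Λ.d a ⊔ Λ.d b - Λ.d a → Λ.d ω = Λ.d a ⊔ Λ.d b - Λ.d b →
      Λ.comp a ξ ≠ Λ.comp b ω) :
    f.S' a * f.S b = 0 := by
  set N := Λ.d a ⊔ Λ.d b
  set Ξ := (hrf (Λ.s a) (N - Λ.d a)).toFinset
  set Ω := (hrf (Λ.s b) (N - Λ.d b)).toFinset
  have hΞ : ∀ ξ, ξ ∈ Ξ ↔ Λ.r ξ = Λ.s a ∧ Λ.d ξ = N - Λ.d a := fun _ =>
    Set.Finite.mem_toFinset _
  have hΩ : ∀ ω, ω ∈ Ω ↔ Λ.r ω = Λ.s b ∧ Λ.d ω = N - Λ.d b := fun _ =>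
    Set.Finite.mem_toFinset _
  have ha : f.S' a = ∑ ξ ∈ Ξ, f.S ξ * f.S' (Λ.comp a ξ) := by
    conv_lhs => rw [← f.P_s_mul_S' a, f.P_eq_sum_S_mul_S' _ _ Ξ hΞ, Finset.sum_mul]
    refine Finset.sum_congr rfl fun ξ hξ => ?_
    rw [mul_assoc, f.S'_mul_S' ((hΞ ξ).mp hξ).1.symm]
  have hb : f.S b = ∑ ω ∈ Ω, f.S (Λ.comp b ω) * f.S' ω := by
    conv_lhs => rw [← f.S_mul_P_s b, f.P_eq_sum_S_mul_S' _ _ Ω hΩ, Finset.mul_sum]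
    refine Finset.sum_congr rfl fun ω hω => ?_
    rw [← mul_assoc, f.S_mul_S ((hΩ ω).mp hω).1.symm]
  rw [ha, hb, Finset.sum_mul_sum]
  refine Finset.sum_eq_zero fun ξ hξ => Finset.sum_eq_zero fun ω hω => ?_
  obtain ⟨hrξ, hdξ⟩ := (hΞ ξ).mp hξ
  obtain ⟨hrω, hdω⟩ := (hΩ ω).mp hω
  have hdeg : Λ.d (Λ.comp a ξ) = Λ.d (Λ.comp b ω) := by
    rw [Λ.d_comp hrξ.symm, Λ.d_comp hrω.symm, hdξ, hdω, add_tsub_cancel_of_le le_sup_left,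
      add_tsub_cancel_of_le le_sup_right]
  rw [mul_assoc, ← mul_assoc (f.S' _),
    f.S'_mul_S_of_ne hdeg (h ξ ω hrξ.symm hrω.symm hdξ hdω), zero_mul, mul_zero]

lemma exists_S'_comp_mul_S_comp_eq_zero (hap : Λ.Aperiodic) (hrf : Λ.RowFinite)
    {μ ν : Λ.E} {v : Λ.V} (hμ : Λ.s μ = v) (hν : Λ.s ν = v) (hd : Λ.d μ ≠ Λ.d ν) :
    ∃ τ : Λ.E, Λ.r τ = v ∧ f.S' (Λ.comp μ τ) * f.S (Λ.comp ν τ) = 0 := by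
  obtain ⟨l, hl, hsup, hne⟩ := hap v (Λ.d μ) (Λ.d ν) hd
  have hμl : Λ.s μ = Λ.r l := hμ.trans hl.symm
  have hνl : Λ.s ν = Λ.r l := hν.trans hl.symm
  refine ⟨l, hl, f.S'_mul_S_eq_zero_of_comp_ne hrf fun ξ ω hξ hω _ _ => ?_⟩
  rw [Λ.s_comp hμl] at hξ
  rw [Λ.s_comp hνl] at hω
  exact KGraph.comp_comp_ne_of_seg_ne hμl hνl hξ hω hsup hne

lemma exists_forall_S'_comp_mul_S_comp_eq_zero (hap : Λ.Aperiodic) (hrf : Λ.RowFinite)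
    {μ : Λ.E} {v : Λ.V} (hμ : Λ.s μ = v) (N : Finset Λ.E)
    (hN : ∀ ν ∈ N, Λ.s ν = v ∧ Λ.d μ ≠ Λ.d ν) :
    ∃ τ : Λ.E, Λ.r τ = v ∧ ∀ ν ∈ N, f.S' (Λ.comp μ τ) * f.S (Λ.comp ν τ) = 0 := by
  classical
  induction N using Finset.induction_on with
  | empty => exact ⟨Λ.ident v, Λ.r_ident v, by simp⟩
  | insert ν N _ ih =>
    obtain ⟨τ₁, hτ₁, h₁⟩ := ih fun ν' hν' => hN ν' (Finset.mem_insert_of_mem hν')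
    obtain ⟨hν, hd⟩ := hN ν (Finset.mem_insert_self ν N)
    have hs : ∀ {ν'}, Λ.s ν' = v → Λ.s ν' = Λ.r τ₁ := fun h => h.trans hτ₁.symm
    obtain ⟨τ₀, hτ₀, h₀⟩ := f.exists_S'_comp_mul_S_comp_eq_zero hap hrf (Λ.s_comp (hs hμ))
      (Λ.s_comp (hs hν)) (by rwa [Λ.d_comp (hs hμ), Λ.d_comp (hs hν), Ne, add_left_inj])
    have hassoc : ∀ {ν'}, Λ.s ν' = v →
        Λ.comp ν' (Λ.comp τ₁ τ₀) = Λ.comp (Λ.comp ν' τ₁) τ₀ := fun h =>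
      (Λ.comp_assoc (hs h) hτ₀.symm).symm
    refine ⟨Λ.comp τ₁ τ₀, (Λ.r_comp hτ₀.symm).trans hτ₁, fun ν' hν' => ?_⟩
    rw [hassoc hμ]
    rcases Finset.mem_insert.mp hν' with rfl | hν'
    · rw [hassoc hν]
      exact h₀
    · have h' := (hN ν' (Finset.mem_insert_of_mem hν')).1
      rw [hassoc h', f.S'_comp_mul_S_comp ((Λ.s_comp (hs hμ)).trans hτ₀.symm)
        ((Λ.s_comp (hs h')).trans hτ₀.symm), h₁ ν' hν', mul_zero, zero_mul]

section

variable {R : Type} [CommRing R] [Algebra R A]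

lemma exists_S'_mul_sum_mul_S_eq_smul_P (hap : Λ.Aperiodic) (hrf : Λ.RowFinite) {ι : Type}
    (T : Finset ι) (α : ι → Λ.E) (c : ι → R) (hα : Set.InjOn α T) {v : Λ.V}
    (hs : ∀ j ∈ T, Λ.s (α j) = v) {i : ι} (hi : i ∈ T) :
    ∃ τ : Λ.E, Λ.r τ = v ∧
      f.S' τ * f.S' (α i) * (∑ j ∈ T, c j • f.S (α j)) * f.S τ = c i • f.P (Λ.s τ) := by
  classical
  obtain ⟨τ, hτ, hvanish⟩ := f.exists_forall_S'_comp_mul_S_comp_eq_zero hap hrf (hs i hi)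
    ((T.image α).filter fun ν => Λ.d (α i) ≠ Λ.d ν) (by
      simp only [Finset.mem_filter, Finset.mem_image]
      rintro _ ⟨⟨j, hj, rfl⟩, hd⟩
      exact ⟨hs j hj, hd⟩)
  have hsτ : ∀ j ∈ T, Λ.s (α j) = Λ.r τ := fun j hj => (hs j hj).trans hτ.symm
  have hterm : ∀ j ∈ T, f.S' τ * f.S' (α i) * (c j • f.S (α j)) * f.S τ =
      c j • (f.S' (Λ.comp (α i) τ) * f.S (Λ.comp (α j) τ)) := fun j hj => by
    rw [f.S'_comp_mul_S_comp (hsτ i hi) (hsτ j hj), mul_smul_comm, smul_mul_assoc,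
      mul_assoc (f.S' τ)]
  refine ⟨τ, hτ, ?_⟩
  rw [Finset.mul_sum, Finset.sum_mul, Finset.sum_congr rfl hterm, Finset.sum_eq_single i]
  · rw [f.S'_mul_S_self, Λ.s_comp (hsτ i hi)]
  · intro j hj hji
    by_cases hd : Λ.d (α i) = Λ.d (α j)
    · have hne : Λ.comp (α i) τ ≠ Λ.comp (α j) τ := fun h =>
        hji (hα hj hi (KGraph.eq_and_eq_of_comp_eq (hsτ j hj) (hsτ i hi) hd.symm h.symm).1)
      rw [f.S'_mul_S_of_ne (by rw [Λ.d_comp (hsτ i hi), Λ.d_comp (hsτ j hj), hd]) hne,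
        smul_zero]
    · rw [hvanish (α j) (Finset.mem_filter.mpr ⟨Finset.mem_image_of_mem α hj, hd⟩), smul_zero]
  · exact fun h => absurd hi h

variable (F : Finset (Λ.E × Λ.E)) (c : Λ.E × Λ.E → R) {n : Fin k → ℕ}

lemma sum_smul_S_mul_S'_mul_S [DecidableEq Λ.E] (hdeg : ∀ p ∈ F, Λ.d p.2 = n) {β : Λ.E}
    (hβ : Λ.d β = n) :
    (∑ p ∈ F, c p • (f.S p.1 * f.S' p.2)) * f.S β =
      ∑ p ∈ F with p.2 = β, c p • (f.S p.1 * f.P (Λ.s β)) := by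
  rw [Finset.sum_mul, Finset.sum_filter]
  refine Finset.sum_congr rfl fun p hp => ?_
  rw [smul_mul_assoc, mul_assoc]
  split_ifs with h
  · rw [h, f.S'_mul_S_self]
  · rw [f.S'_mul_S_of_ne ((hdeg p hp).trans hβ.symm) h, mul_zero, smul_zero]

lemma sum_smul_S_mul_S'_mul_S_eq_sum_filter [DecidableEq Λ.V] [DecidableEq Λ.E]
    (hdeg : ∀ p ∈ F, Λ.d p.2 = n) {β : Λ.E} (hβ : Λ.d β = n) :
    (∑ p ∈ F, c p • (f.S p.1 * f.S' p.2)) * f.S β =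
      ∑ p ∈ F with p.2 = β ∧ Λ.s p.1 = Λ.s β, c p • f.S p.1 := by
  rw [f.sum_smul_S_mul_S'_mul_S F c hdeg hβ, ← Finset.filter_filter,
    Finset.sum_filter fun p : Λ.E × Λ.E => Λ.s p.1 = Λ.s β]
  refine Finset.sum_congr rfl fun p _ => ?_
  split_ifs with h
  · rw [← h, f.S_mul_P_s]
  · rw [f.S_mul_P_of_ne h, smul_zero]

/-- Right multiplication by `s_β` isolates the terms with ghost part `β`; summing
`(x s_β) s_{β*}` over the ghost parts recovers `x`. -/
lemma exists_mem_sum_smul_S_mul_S'_mul_S_ne_zero (hdeg : ∀ p ∈ F, Λ.d p.2 = n)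
    (hx : ∑ p ∈ F, c p • (f.S p.1 * f.S' p.2) ≠ 0) :
    ∃ p ∈ F, (∑ p ∈ F, c p • (f.S p.1 * f.S' p.2)) * f.S p.2 ≠ 0 := by
  classical
  set x := ∑ p ∈ F, c p • (f.S p.1 * f.S' p.2)
  by_contra! h
  have hβ : ∀ β ∈ F.image Prod.snd,
      x * f.S β * f.S' β = ∑ p ∈ F with p.2 = β, c p • (f.S p.1 * f.S' p.2) := by
    intro β hβ
    obtain ⟨p, hp, rfl⟩ := Finset.mem_image.mp hβ
    rw [f.sum_smul_S_mul_S'_mul_S F c hdeg (hdeg p hp), Finset.sum_mul]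
    refine Finset.sum_congr rfl fun q hq => ?_
    rw [smul_mul_assoc, mul_assoc, ← (Finset.mem_filter.mp hq).2, f.P_s_mul_S']
  refine hx ?_
  calc x = ∑ β ∈ F.image Prod.snd, ∑ p ∈ F with p.2 = β, c p • (f.S p.1 * f.S' p.2) :=
        (Finset.sum_fiberwise_of_maps_to (fun p hp => Finset.mem_image_of_mem _ hp) _).symm
    _ = ∑ β ∈ F.image Prod.snd, x * f.S β * f.S' β := (Finset.sum_congr rfl hβ).symm
    _ = 0 := Finset.sum_eq_zero fun β hβ => by
        obtain ⟨p, hp, rfl⟩ := Finset.mem_image.mp hβ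
        rw [h p hp, zero_mul]

end

end KPFamily

theorem exists_compress_to_vertex_general (k : ℕ) (Λ : KGraph k)
    (hap : Λ.Aperiodic) (hrf : Λ.RowFinite)
    (R : Type) [CommRing R] (A : Type) [Ring A] [Algebra R A]
    (KP : KPAlgebra Λ R A) (x : A) (hx : x ≠ 0)
    (F : Finset (Λ.E × Λ.E)) (c : Λ.E × Λ.E → R) (n : Fin k → ℕ)
    (hsum : x = ∑ p ∈ F, c p • (KP.fam.S p.1 * KP.fam.S' p.2))
    (hdeg : ∀ p ∈ F, Λ.d p.2 = n) :
    ∃ (σ τ : Λ.E), ∃ p ∈ F, ∃ w : Λ.V,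
      KP.fam.S' σ * x * KP.fam.S τ = c p • KP.fam.P w := by
  classical
  set f := KP.fam
  subst hsum
  obtain ⟨⟨_, γ⟩, hγF, hxγ⟩ := f.exists_mem_sum_smul_S_mul_S'_mul_S_ne_zero F c hdeg hx
  have hy := f.sum_smul_S_mul_S'_mul_S_eq_sum_filter F c hdeg (hdeg _ hγF)
  rw [hy] at hxγ
  set T := F.filter fun p => p.2 = γ ∧ Λ.s p.1 = Λ.s γ
  have hT : ∀ p ∈ T, p ∈ F ∧ p.2 = γ ∧ Λ.s p.1 = Λ.s γ := fun p => Finset.mem_filter.mp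
  obtain ⟨δ, hδ⟩ : T.Nonempty := Finset.nonempty_of_sum_ne_zero hxγ
  obtain ⟨τ, hτ, hδτ⟩ := f.exists_S'_mul_sum_mul_S_eq_smul_P hap hrf T Prod.fst c
    (fun p hp q hq h => Prod.ext h ((hT p hp).2.1.trans (hT q hq).2.1.symm))
    (fun p hp => (hT p hp).2.2) hδ
  refine ⟨Λ.comp δ.1 τ, Λ.comp γ τ, δ, (hT δ hδ).1, Λ.s τ, ?_⟩
  rw [← f.S'_mul_S' ((hT δ hδ).2.2.trans hτ.symm), ← f.S_mul_S hτ.symm, ← hδτ, ← hy]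
  simp only [mul_assoc]

/-- **Proposition 4.9.**  Let `Λ` be an aperiodic row-finite `k`-graph without
sources and let `x = Σ_{(a,b) ∈ F} c_{a,b} • s_a s_{b*}` be a nonzero element
of `KP_R(Λ)` in normal form.  Then there exist `σ, τ ∈ Λ`, `(δ,γ) ∈ F` and a
vertex `w ∈ Λ^0` such that `s_{σ*} x s_τ = c_{δ,γ} • p_w`. -/
theorem exists_compress_to_vertex (k : ℕ) (hk : 0 < k) (Λ : KGraph k)
    (hap : Λ.Aperiodic) (hrf : Λ.RowFinite) (hns : Λ.NoSources)
    (R : Type) [CommRing R] (A : Type) [Ring A] [Algebra R A]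
    (KP : KPAlgebra Λ R A) (x : A) (hx : x ≠ 0)
    (F : Finset (Λ.E × Λ.E)) (c : Λ.E × Λ.E → R) (n : Fin k → ℕ)
    (hsum : x = ∑ p ∈ F, c p • (KP.fam.S p.1 * KP.fam.S' p.2))
    (hc : ∀ p ∈ F, c p ≠ 0) (hdeg : ∀ p ∈ F, Λ.d p.2 = n) :
    ∃ (σ τ : Λ.E), ∃ p ∈ F, ∃ w : Λ.V,
      KP.fam.S' σ * x * KP.fam.S τ = c p • KP.fam.P w :=
  exists_compress_to_vertex_general k Λ hap hrf R A KP x hx F c n hsum hdeg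

end KP
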